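/- If L is a stable triplet cover of a fully-resolved X-tree T with n := |X| ≥ 3, then L is a shellable lasso for T, i.e., the set binom(X,2) − L is T-shellable. -/

import Mathlib

open SimpleGraph

/-- An `X`-tree: a finite tree whose leaf set is (the image of) `X`,
with no vertices of degree 2. -/
structure XTree (α : Type) (X : Set α) where
  V : Type
  fintypeV : Fintype V
  tree : SimpleGraph V
  isTree : tree.IsTree
  ι : α → V
  ι_injOn : Set.InjOn ι X
  leaf_iff : ∀ v : V, (tree.neighborSet v).ncard = 1 ↔ v ∈ ι '' X
  no_deg_two : ∀ v : V, (tree.neighborSet v).ncard ≠ 2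

namespace XTree

variable {α : Type} {X : Set α}

/-- A vertex is interior if it is not a leaf. -/
def IsInterior (T : XTree α X) (v : T.V) : Prop := v ∉ T.ι '' X

/-- Fully-resolved: every interior vertex has degree 3. -/
def IsFullyResolved (T : XTree α X) : Prop :=
  ∀ v : T.V, T.IsInterior v → (T.tree.neighborSet v).ncard = 3

/-- The unique path between two vertices of the tree. -/
noncomputable def treePath (T : XTree α X) (u v : T.V) : T.tree.Walk u v :=
  (T.isTree.existsUnique_path u v).exists.choose

lemma treePath_isPath (T : XTree α X) (u v : T.V) : (T.treePath u v).IsPath :=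
  (T.isTree.existsUnique_path u v).exists.choose_spec

/-- Weighted path distance between two vertices. -/
noncomputable def pathDist (T : XTree α X) (w : Sym2 T.V → ℝ) (u v : T.V) : ℝ :=
  ((T.treePath u v).edges.map w).sum

lemma treePath_symm (T : XTree α X) (u v : T.V) :
    T.treePath u v = (T.treePath v u).reverse :=
  (T.isTree.existsUnique_path u v).unique (T.treePath_isPath u v)
    ((T.treePath_isPath v u).reverse)

lemma pathDist_symm (T : XTree α X) (w : Sym2 T.V → ℝ) (u v : T.V) :
    T.pathDist w u v = T.pathDist w v u := by
  unfold pathDist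
  rw [treePath_symm, SimpleGraph.Walk.edges_reverse, List.map_reverse, List.sum_reverse]

/-- The induced distance on pairs of leaf labels. -/
noncomputable def cordDist (T : XTree α X) (w : Sym2 T.V → ℝ) : Sym2 α → ℝ :=
  Sym2.lift ⟨fun a b => T.pathDist w (T.ι a) (T.ι b),
    fun a b => T.pathDist_symm w (T.ι a) (T.ι b)⟩

/-- An edge-weighting assigns a nonnegative weight to every edge. -/
def IsEdgeWeighting (T : XTree α X) (w : Sym2 T.V → ℝ) : Prop :=
  ∀ e ∈ T.tree.edgeSet, 0 ≤ w e

/-- A proper edge-weighting gives positive weight to every interior edge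
(i.e. every edge not incident with a leaf). -/
def IsProperWeighting (T : XTree α X) (w : Sym2 T.V → ℝ) : Prop :=
  T.IsEdgeWeighting w ∧ ∀ e ∈ T.tree.edgeSet, (∀ v ∈ e, T.IsInterior v) → 0 < w e

/-- The set of cords (2-element subsets) of `X`. -/
def cords (X : Set α) : Set (Sym2 α) := {c | ¬ c.IsDiag ∧ ∀ a ∈ c, a ∈ X}

/-- Two weighted trees are `L`-isometric if their leaf distances agree on `L`. -/
def LIsometric (T : XTree α X) (w : Sym2 T.V → ℝ) (T' : XTree α X) (w' : Sym2 T'.V → ℝ)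
    (L : Set (Sym2 α)) : Prop :=
  ∀ c ∈ L, T.cordDist w c = T'.cordDist w' c

/-- `L` is an edge-weight lasso for `T`. -/
def IsEdgeWeightLasso (T : XTree α X) (L : Set (Sym2 α)) : Prop :=
  ∀ w w' : Sym2 T.V → ℝ, T.IsProperWeighting w → T.IsProperWeighting w' →
    LIsometric T w T w' L → ∀ e ∈ T.tree.edgeSet, w e = w' e

/-- Two `X`-trees are equivalent if there is a graph isomorphism fixing `X`. -/
def Equivalent (T T' : XTree α X) : Prop :=
  ∃ φ : T.tree ≃g T'.tree, ∀ a ∈ X, φ (T.ι a) = T'.ι a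

/-- `L` is a topological lasso for `T`. -/
def IsTopologicalLasso (T : XTree α X) (L : Set (Sym2 α)) : Prop :=
  ∀ (T' : XTree α X) (w : Sym2 T.V → ℝ) (w' : Sym2 T'.V → ℝ),
    T.IsProperWeighting w → T'.IsProperWeighting w' →
    LIsometric T w T' w' L → Equivalent T T'

/-- `L` is a strong lasso for `T`. -/
def IsStrongLasso (T : XTree α X) (L : Set (Sym2 α)) : Prop :=
  IsEdgeWeightLasso T L ∧ IsTopologicalLasso T L

/-- The set of leaf labels on the side of edge `e` containing endpoint `u`. -/
def sideSet (T : XTree α X) (e : Sym2 T.V) (u : T.V) : Set α :=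
  {a | a ∈ X ∧ (T.tree.deleteEdges {e}).Reachable (T.ι a) u}

/-- The clusters of `T`: leaf sets of the two components of `T - e`, over all edges `e`. -/
def clus (T : XTree α X) : Set (Set α) :=
  {A | ∃ e ∈ T.tree.edgeSet, ∃ u ∈ e, A = T.sideSet e u}

/-- A stable transversal for a collection of subsets of `α`. -/
def IsStableTransversal (C : Set (Set α)) (f : Set α → α) : Prop :=
  (∀ A ∈ C, f A ∈ A) ∧ ∀ A ∈ C, ∀ B ∈ C, f A ∈ B → B ⊆ A → f A = f B

/-- Leaf labels of the component of `T - v` containing the vertex `u`. -/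
def compSet (T : XTree α X) (v u : T.V) : Set α :=
  {a | a ∈ X ∧ ∃ p : T.tree.Walk (T.ι a) u, v ∉ p.support}

/-- The triplet cover `L_{(T,f)}` generated by a transversal `f`. -/
def tripletCoverOf (T : XTree α X) (f : Set α → α) : Set (Sym2 α) :=
  {c | ∃ v u₁ u₂ : T.V, T.IsInterior v ∧ T.tree.Adj v u₁ ∧ T.tree.Adj v u₂ ∧ u₁ ≠ u₂ ∧
    c = s(f (T.compSet v u₁), f (T.compSet v u₂))}

/-- `L` is a stable triplet cover of `T`. -/
def IsStableTripletCover (T : XTree α X) (L : Set (Sym2 α)) : Prop :=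
  ∃ f : Set α → α, IsStableTransversal (clus T) f ∧ L = tripletCoverOf T f

/-- `T|{a,b,c,d}` is the quartet tree `ab||cd`: the four leaves are distinct members
of `X` and the path from `a` to `b` is vertex-disjoint from the path from `c` to `d`. -/
def Quartet (T : XTree α X) (a b c d : α) : Prop :=
  a ∈ X ∧ b ∈ X ∧ c ∈ X ∧ d ∈ X ∧ List.Pairwise (· ≠ ·) [a, b, c, d] ∧
  ∀ (p : T.tree.Walk (T.ι a) (T.ι b)) (q : T.tree.Walk (T.ι c) (T.ι d)),
    p.IsPath → q.IsPath → ∀ v, v ∈ p.support → v ∉ q.support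

/-- The cord `c` admits pivots relative to already-available cords `L ∪ earlier`. -/
def HasPivots (T : XTree α X) (L : Set (Sym2 α)) (earlier : List (Sym2 α))
    (c : Sym2 α) : Prop :=
  ∃ a b p q : α, c = s(a, b) ∧ Quartet T a p q b ∧
    ∀ c' ∈ [s(a, p), s(a, q), s(b, p), s(b, q), s(p, q)], c' ∈ L ∨ c' ∈ earlier

/-- `ord` is a shellable ordering of `cords X - L` with respect to `T`. -/
def IsShellableOrdering (T : XTree α X) (L : Set (Sym2 α)) (ord : List (Sym2 α)) : Prop :=
  ord.Nodup ∧ (∀ c, c ∈ ord ↔ c ∈ cords X \ L) ∧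
  ∀ i (h : i < ord.length), HasPivots T L (ord.take i) (ord.get ⟨i, h⟩)

/-- `L` is a shellable lasso for `T`: `L ⊆ cords X`, every element of `X` occurs in some
cord of `L`, and `cords X - L` admits a shellable ordering. -/
def IsShellableLasso (T : XTree α X) (L : Set (Sym2 α)) : Prop :=
  L ⊆ cords X ∧ (∀ a ∈ X, ∃ c ∈ L, a ∈ c) ∧ ∃ ord, IsShellableOrdering T L ord

/-- The graph `(Xs, L)` is a 2d-tree. -/
def Is2dTree (Xs : Set α) (L : Set (Sym2 α)) : Prop :=
  ∃ ord : List α, ord.Nodup ∧ (∀ a, a ∈ ord ↔ a ∈ Xs) ∧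
    ∃ h2 : 2 ≤ ord.length,
      s(ord.get ⟨0, by omega⟩, ord.get ⟨1, by omega⟩) ∈ L ∧
      ∀ i (h : i < ord.length), 2 ≤ i →
        {b | b ∈ ord.take i ∧ s(ord.get ⟨i, h⟩, b) ∈ L}.ncard = 2

/-- Leaves `x` and `y` form a cherry of `T`. -/
def IsCherry (T : XTree α X) (x y : α) : Prop :=
  x ≠ y ∧ x ∈ X ∧ y ∈ X ∧ ∃ v : T.V, T.tree.Adj (T.ι x) v ∧ T.tree.Adj (T.ι y) v

/-- `T'` is (equivalent to) the restriction `T|Y` of `T` to `Y ⊆ X`, characterized by the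
fact that the clusters of `T|Y` are exactly the nonempty proper restrictions to `Y`
of clusters of `T`. -/
def IsRestrictionOf {Y : Set α} (T' : XTree α Y) (T : XTree α X) : Prop :=
  Y ⊆ X ∧ clus T' = {A | (∃ B ∈ clus T, A = B ∩ Y) ∧ A.Nonempty ∧ A ≠ Y}

open Classical in
/-- One application of the extension rule (R), acting on a state consisting of
the current set of cords together with the current distance values. -/
def RStep (Xs : Set α) (S S' : Set (Sym2 α) × (Sym2 α → ℝ)) : Prop :=
  ∃ x y u z : α, x ∈ Xs ∧ y ∈ Xs ∧ u ∈ Xs ∧ z ∈ Xs ∧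
    List.Pairwise (· ≠ ·) [x, y, u, z] ∧
    s(x, y) ∈ S.1 ∧ s(y, u) ∈ S.1 ∧ s(y, z) ∈ S.1 ∧ s(x, u) ∈ S.1 ∧ s(u, z) ∈ S.1 ∧
    s(x, z) ∉ S.1 ∧
    S.2 s(x, y) + S.2 s(u, z) < S.2 s(x, u) + S.2 s(y, z) ∧
    S'.1 = insert s(x, z) S.1 ∧
    S'.2 = Function.update S.2 s(x, z) (S.2 s(x, u) + S.2 s(y, z) - S.2 s(y, u))

/-- `S` is the result `cl_R(L)` (with its `d`-values) of exhaustively applying rule (R)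
starting from `L` with initial distance values `d`. -/
def IsRClosureOf (Xs : Set α) (L : Set (Sym2 α)) (d : Sym2 α → ℝ)
    (S : Set (Sym2 α) × (Sym2 α → ℝ)) : Prop :=
  Relation.ReflTransGen (RStep Xs) (L, d) S ∧ ∀ S', ¬ RStep Xs S S'

end XTree

/-!
Shell the cords outside `L = L_{(T,f)}` in decreasing order of `cordDepth`. An anchor of a
leaf `a` is an interior vertex `v` at which `f` picks `a` from the leaves on `a`'s side of `v`;
`anchorDepth f a b` is the largest size of such a side over the anchors on the path from `a`
to `b`. If `ab ∉ L`, take a deepest anchor `z₀` of `a` and its neighbour `z₁` towards `b`: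
the side of `a` at `z₁` is strictly larger, so `p`, the leaf `f` picks there, is not `a`; by
stability `p` hangs off the path at `z₀` and `ap ∈ L`. Symmetrically `q` hangs off at a
deepest anchor `w₀` of `b`, whose neighbour towards `a` is `w₁`, and stability forces `z₀` to
lie strictly before `w₀`. So `T|{a,p,q,b} = ap||qb`, and `z₁`, `w₁` are anchors of `p`, `q`
deeper than `z₀`, `w₀`, whence `aq`, `bp` and `pq` all have larger depth than `ab`.
-/

lemma Set.Finite.exists_list_mem_take_of_lt {β : Type*} {S : Set β} (hS : S.Finite)
    (μ : β → ℕ) : ∃ l : List β, l.Nodup ∧ (∀ c, c ∈ l ↔ c ∈ S) ∧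
      ∀ i (h : i < l.length), ∀ d ∈ S, μ (l.get ⟨i, h⟩) < μ d → d ∈ l.take i := by
  let r : β → β → Prop := fun c d => μ d ≤ μ c
  have : Std.Total r := ⟨fun c d => le_total (μ d) (μ c)⟩
  have : IsTrans β r := ⟨fun _ _ _ h₁ h₂ => h₂.trans h₁⟩
  have hperm := List.perm_insertionSort r hS.toFinset.toList
  have hmem : ∀ c, c ∈ hS.toFinset.toList.insertionSort r ↔ c ∈ S := by
    simp [hperm.mem_iff]
  refine ⟨_, hperm.nodup_iff.2 (Finset.nodup_toList _), hmem, fun i h d hd hlt => ?_⟩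
  obtain ⟨j, hj, rfl⟩ := List.getElem_of_mem ((hmem d).2 hd)
  have hji : j < i := by
    by_contra! hij
    rcases hij.lt_or_eq with hij | rfl
    · exact hlt.not_ge (List.pairwise_iff_getElem.1 (List.pairwise_insertionSort r _) i j h hj hij)
    · exact lt_irrefl _ hlt
  exact List.mem_iff_getElem.2 ⟨j, by rw [List.length_take]; exact lt_min hji hj, by simp⟩

namespace XTree

variable {α : Type} {X : Set α} {T : XTree α X}

def Btw (T : XTree α X) (u v w : T.V) : Prop := v ∈ (T.treePath u w).support

lemma treePath_eq_of_isPath {u v : T.V} (p : T.tree.Walk u v) (hp : p.IsPath) :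
    p = T.treePath u v :=
  (T.isTree.existsUnique_path u v).unique hp (T.treePath_isPath u v)

lemma treePath_self (u : T.V) : T.treePath u u = Walk.nil :=
  (treePath_eq_of_isPath _ Walk.IsPath.nil).symm

lemma treePath_of_adj {x y : T.V} (h : T.tree.Adj x y) :
    T.treePath x y = Walk.cons h Walk.nil :=
  (treePath_eq_of_isPath _ (Walk.IsPath.nil.cons (by simp [h.ne]))).symm

lemma btw_left {u w : T.V} : T.Btw u u w := Walk.start_mem_support _

lemma btw_right {u w : T.V} : T.Btw u w w := Walk.end_mem_support _

lemma btw_self_iff {u v : T.V} : T.Btw u v u ↔ v = u := by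
  simp [Btw, treePath_self]

lemma Btw.symm {u v w : T.V} (h : T.Btw u v w) : T.Btw w v u := by
  rwa [Btw, T.treePath_symm, Walk.support_reverse, List.mem_reverse]

lemma btw_adj_iff {x y v : T.V} (h : T.tree.Adj x y) : T.Btw x v y ↔ v = x ∨ v = y := by
  simp [Btw, treePath_of_adj h, or_comm]

lemma btw_of_adj_of_adj {v x y : T.V} (hx : T.tree.Adj v x) (hy : T.tree.Adj v y)
    (hxy : x ≠ y) : T.Btw x v y := by
  have hp : (Walk.cons hx.symm (Walk.cons hy Walk.nil)).IsPath :=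
    (Walk.IsPath.nil.cons (by simp [hy.ne])).cons (by simp [hx.ne', hxy])
  simp [Btw, ← treePath_eq_of_isPath _ hp]

lemma Btw.treePath_eq_append {u v w : T.V} (h : T.Btw u v w) :
    T.treePath u w = (T.treePath u v).append (T.treePath v w) := by
  classical
  have hp := T.treePath_isPath u w
  rw [← treePath_eq_of_isPath _ (hp.takeUntil h), ← treePath_eq_of_isPath _ (hp.dropUntil h)]
  exact ((T.treePath u w).take_spec h).symm

lemma Btw.btw_iff {u v w z : T.V} (h : T.Btw u v w) :
    T.Btw u z w ↔ T.Btw u z v ∨ T.Btw v z w := by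
  rw [Btw, h.treePath_eq_append, Walk.mem_support_append_iff]; rfl

lemma Btw.trans_left {u v w z : T.V} (h : T.Btw u v w) (hz : T.Btw u z v) : T.Btw u z w :=
  h.btw_iff.2 (Or.inl hz)

lemma Btw.trans_right {u v w z : T.V} (h : T.Btw u v w) (hz : T.Btw v z w) : T.Btw u z w :=
  h.btw_iff.2 (Or.inr hz)

lemma not_btw_iff_exists_walk {u v w : T.V} :
    ¬ T.Btw u v w ↔ ∃ p : T.tree.Walk u w, v ∉ p.support := by
  classical
  refine ⟨fun h => ⟨_, h⟩, fun ⟨p, hp⟩ hb => hp (p.support_bypass_subset_support ?_)⟩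
  rwa [treePath_eq_of_isPath _ p.bypass_isPath]

lemma not_btw_trans {u v w z : T.V} (h₁ : ¬ T.Btw u v w) (h₂ : ¬ T.Btw w v z) :
    ¬ T.Btw u v z := by
  rw [not_btw_iff_exists_walk] at h₁ h₂ ⊢
  obtain ⟨p, hp⟩ := h₁
  obtain ⟨q, hq⟩ := h₂
  exact ⟨p.append q, by rw [Walk.mem_support_append_iff]; tauto⟩

lemma Btw.eq_of_btw_of_btw {u v w z : T.V} (h : T.Btw u v w) (h₁ : T.Btw u z v)
    (h₂ : T.Btw v z w) : z = v := by
  have hnd := (T.treePath_isPath u w).support_nodup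
  rw [h.treePath_eq_append, Walk.support_append, List.nodup_append] at hnd
  by_contra hne
  rw [Btw, ← Walk.cons_tail_support, List.mem_cons] at h₂
  exact hnd.2.2 z h₁ z (h₂.resolve_left hne) rfl

lemma Btw.eq_of_btw {v z w : T.V} (h : T.Btw v z w) (h' : T.Btw z v w) : v = z :=
  h.eq_of_btw_of_btw btw_left h'

lemma Btw.eq_of_btw' {u v w : T.V} (h : T.Btw u v w) (h' : T.Btw u w v) : v = w :=
  h'.eq_of_btw_of_btw h btw_right

lemma Btw.shift_left {u v w z : T.V} (h : T.Btw u v w) (hz : T.Btw u z v) : T.Btw z v w := by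
  by_contra hc
  refine not_btw_trans (fun hb => ?_) hc h
  rw [hb.eq_of_btw' hz] at hc
  exact hc btw_left

lemma Btw.shift_right {u v w z : T.V} (h : T.Btw u v w) (hz : T.Btw v z w) : T.Btw u v z := by
  by_contra hc
  refine not_btw_trans hc (fun hb => ?_) h
  rw [hz.eq_of_btw hb] at hc
  exact hc btw_right

lemma Btw.extend {x y z w : T.V} (h : T.Btw x y z) (h' : T.Btw y z w) (hyz : y ≠ z) :
    T.Btw x z w := by
  by_contra hc
  exact not_btw_trans (fun hb => hyz (hb.eq_of_btw h.symm)) hc h'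

lemma Btw.total {a v w b : T.V} (hv : T.Btw a v b) (hw : T.Btw a w b) :
    T.Btw a v w ∨ T.Btw a w v :=
  (hv.btw_iff.1 hw).symm.imp hv.shift_right id

lemma btw_of_adj_of_not_btw {u z₀ z₁ : T.V} (hadj : T.tree.Adj z₀ z₁)
    (h : ¬ T.Btw u z₀ z₁) : T.Btw u z₁ z₀ := by
  have hp := (T.treePath_isPath u z₁).concat h hadj.symm
  rw [Btw, ← treePath_eq_of_isPath _ hp, Walk.support_concat]
  exact List.mem_append_left _ btw_right

lemma exists_adj_btw {v u : T.V} (h : v ≠ u) : ∃ w, T.tree.Adj v w ∧ T.Btw v w u := by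
  obtain ⟨w, hadj, q, hq⟩ := Walk.exists_eq_cons_of_ne h (T.treePath v u)
  exact ⟨w, hadj, by simp [Btw, hq]⟩

lemma exists_adj_not_btw {v u : T.V} (h : u ≠ v) : ∃ w, T.tree.Adj v w ∧ ¬ T.Btw u v w := by
  obtain ⟨w, hadj, hb⟩ := exists_adj_btw h.symm
  exact ⟨w, hadj, fun h' => hadj.ne (hb.eq_of_btw h'.symm)⟩

lemma Btw.btw_of_adj {z₀ z₁ w b : T.V} (hadj : T.tree.Adj z₀ z₁) (h₁ : T.Btw z₀ z₁ b)
    (hw : T.Btw z₀ w b) (hw₀ : w ≠ z₀) : T.Btw z₀ z₁ w := by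
  rcases h₁.total hw with h | h
  · exact h
  · rcases (btw_adj_iff hadj).1 h with rfl | rfl
    exacts [absurd rfl hw₀, btw_right]

-- The vertices on `a`'s side of `w`, and the remaining ones, are both closed under paths.
lemma Btw.not_btw_of_not_btw {x y v w a : T.V} (h : T.Btw x v y) (hx : ¬ T.Btw x w a)
    (hy : ¬ T.Btw y w a) : ¬ T.Btw v w a := by
  have hxy : ¬ T.Btw x w y := not_btw_trans hx fun hb => hy hb.symm
  exact not_btw_trans (fun hb => hxy (h.trans_left hb.symm)) hx

lemma Btw.btw_of_btw_of_btw {x y v w a : T.V} (h : T.Btw x v y) (hx : T.Btw x w a)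
    (hy : T.Btw y w a) : T.Btw v w a := by
  by_contra hv
  have h₁ : T.Btw x w v := not_not.1 fun hc => not_btw_trans hc hv hx
  have h₂ : T.Btw v w y := not_not.1 fun hc => not_btw_trans (fun hb => hc hb.symm) hv hy
  exact hv (h.eq_of_btw_of_btw h₁ h₂ ▸ btw_left)

lemma isInterior_of_adj_of_adj {v x y : T.V} (hx : T.tree.Adj v x) (hy : T.tree.Adj v y)
    (hxy : x ≠ y) : T.IsInterior v := by
  have := T.fintypeV
  intro hv
  have hle := Set.ncard_le_ncard (t := T.tree.neighborSet v) (s := {x, y})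
    (Set.insert_subset_iff.2 ⟨hx, Set.singleton_subset_iff.2 hy⟩)
  rw [Set.ncard_pair hxy, (T.leaf_iff v).2 hv] at hle
  omega

lemma exists_adj_ne {v x : T.V} (hv : T.IsInterior v) (hx : T.tree.Adj v x) :
    ∃ y, T.tree.Adj v y ∧ y ≠ x := by
  by_contra! h
  have hset : T.tree.neighborSet v = {x} := Set.eq_singleton_iff_unique_mem.2 ⟨hx, h⟩
  exact hv ((T.leaf_iff v).1 (by rw [hset, Set.ncard_singleton]))

lemma exists_adj_ne_ne {v x y : T.V} (hx : T.tree.Adj v x) (hy : T.tree.Adj v y)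
    (hxy : x ≠ y) : ∃ z, T.tree.Adj v z ∧ z ≠ x ∧ z ≠ y := by
  by_contra! h
  have hset : T.tree.neighborSet v = {x, y} := by
    ext z
    refine ⟨fun hz => ?_, by rintro (rfl | rfl); exacts [hx, hy]⟩
    by_cases hzx : z = x
    exacts [Or.inl hzx, Or.inr (h z hz hzx)]
  exact T.no_deg_two v (by rw [hset, Set.ncard_pair hxy])

lemma isInterior_of_btw {x y v : T.V} (h : T.Btw x v y) (hx : v ≠ x) (hy : v ≠ y) :
    T.IsInterior v := by
  obtain ⟨x', hx', hxv⟩ := exists_adj_btw hx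
  obtain ⟨y', hy', hyv⟩ := exists_adj_btw hy
  refine isInterior_of_adj_of_adj hx' hy' fun h' => ?_
  subst h'
  exact hx'.ne (h.eq_of_btw_of_btw hxv.symm hyv).symm

lemma btw_of_neighborSet_eq {x v w : T.V} (hv : T.tree.neighborSet x = {v}) (hw : w ≠ x) :
    T.Btw w v x := by
  obtain ⟨v', hadj, hb⟩ := exists_adj_btw hw.symm
  have hv' : v' ∈ T.tree.neighborSet x := hadj
  rw [hv, Set.mem_singleton_iff] at hv'
  exact (hv' ▸ hb).symm

lemma exists_neighborSet_eq {a : α} (ha : a ∈ X) : ∃ v, T.tree.neighborSet (T.ι a) = {v} :=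
  Set.ncard_eq_one.1 ((T.leaf_iff _).2 ⟨a, ha, rfl⟩)

lemma isInterior_of_neighborSet_eq (hcard : 3 ≤ X.ncard) {a : α} (ha : a ∈ X) {v : T.V}
    (hv : T.tree.neighborSet (T.ι a) = {v}) : T.IsInterior v := by
  have hadj : T.tree.Adj (T.ι a) v := by rw [← mem_neighborSet, hv]; rfl
  rintro ⟨c, hc, rfl⟩
  obtain ⟨b, hb, hbac⟩ : ∃ b ∈ X, b ∉ ({a, c} : Set α) := Set.not_subset.1 fun hsub => by
    have := (Set.ncard_le_ncard hsub).trans (Set.ncard_insert_le a {c})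
    rw [Set.ncard_singleton] at this
    omega
  simp only [Set.mem_insert_iff, Set.mem_singleton_iff, not_or] at hbac
  have hba : T.ι b ≠ T.ι a := fun h => hbac.1 (T.ι_injOn hb ha h)
  have hbc : T.ι c ≠ T.ι b := fun h => hbac.2 (T.ι_injOn hb hc h.symm)
  exact isInterior_of_btw (btw_of_neighborSet_eq hv hba) hbc hadj.ne' ⟨c, hc, rfl⟩

lemma finite (T : XTree α X) : X.Finite := by
  have := T.fintypeV
  exact Set.Finite.of_finite_image (Set.toFinite _) T.ι_injOn

lemma mem_compSet_iff {v u : T.V} {x : α} :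
    x ∈ T.compSet v u ↔ x ∈ X ∧ ¬ T.Btw (T.ι x) v u := by
  rw [not_btw_iff_exists_walk]
  rfl

lemma compSet_subset_X {v u : T.V} : T.compSet v u ⊆ X := fun _ hx => hx.1

lemma compSet_congr {v x y : T.V} (h : ¬ T.Btw x v y) : T.compSet v x = T.compSet v y := by
  ext a
  simp only [mem_compSet_iff]
  exact and_congr_right fun _ =>
    ⟨fun ha => not_btw_trans ha h, fun ha => not_btw_trans ha fun hb => h hb.symm⟩

lemma compSet_subset_compSet {u v w : T.V} (h : T.Btw u v w) : T.compSet v u ⊆ T.compSet w u :=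
  fun _ hx => (mem_compSet_iff.2 ⟨hx.1, fun hb =>
    (mem_compSet_iff.1 hx).2 (hb.symm.trans_left h).symm⟩)

lemma compSet_subset_compSet_of_adj {u v w : T.V} (hadj : T.tree.Adj v w) (h : T.Btw u v w) :
    T.compSet v u ⊆ T.compSet w v :=
  fun _ hx => (mem_compSet_iff.2 ⟨hx.1, fun hb =>
    (mem_compSet_iff.1 hx).2 (hb.extend h.symm hadj.ne')⟩)

lemma self_mem_compSet {a : α} (ha : a ∈ X) {v : T.V} (hv : T.ι a ≠ v) :
    a ∈ T.compSet v (T.ι a) :=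
  mem_compSet_iff.2 ⟨ha, fun hb => hv (btw_self_iff.1 hb).symm⟩

lemma compSet_eq_singleton {a : α} (ha : a ∈ X) {v : T.V}
    (hv : T.tree.neighborSet (T.ι a) = {v}) : T.compSet v (T.ι a) = {a} := by
  have hadj : T.tree.Adj (T.ι a) v := by rw [← mem_neighborSet, hv]; rfl
  refine Set.eq_singleton_iff_unique_mem.2 ⟨self_mem_compSet ha hadj.ne, fun x hx => ?_⟩
  by_contra hxa
  exact (mem_compSet_iff.1 hx).2
    (btw_of_neighborSet_eq hv fun h => hxa (T.ι_injOn hx.1 ha h))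

lemma Btw.disjoint_compSet {v y y' : T.V} (h : T.Btw y v y') :
    Disjoint (T.compSet v y) (T.compSet v y') :=
  Set.disjoint_left.2 fun _ hx hx' =>
    not_btw_trans (fun hb => (mem_compSet_iff.1 hx).2 hb.symm) (mem_compSet_iff.1 hx').2 h

lemma reachable_deleteEdges_iff_not_btw {v u : T.V} (h : T.tree.Adj v u) (w : T.V) :
    (T.tree.deleteEdges {s(v, u)}).Reachable w u ↔ ¬ T.Btw w v u := by
  classical
  rw [reachable_deleteEdges_iff_exists_walk]
  refine ⟨fun ⟨p, hp⟩ hb => hp (p.edges_bypass_subset_edges ?_), fun hb =>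
    ⟨T.treePath w u, fun he => hb (Walk.fst_mem_support_of_mem_edges _ he)⟩⟩
  rw [treePath_eq_of_isPath _ p.bypass_isPath, hb.treePath_eq_append, treePath_of_adj h]
  simp

lemma compSet_mem_clus {v u : T.V} (h : T.tree.Adj v u) : T.compSet v u ∈ clus T := by
  refine ⟨s(v, u), h, u, Sym2.mem_mk_right v u, ?_⟩
  ext x
  rw [mem_compSet_iff, ← reachable_deleteEdges_iff_not_btw h]
  rfl

lemma compSet_mem_clus_of_ne {v u : T.V} (h : u ≠ v) : T.compSet v u ∈ clus T := by
  obtain ⟨w, hadj, hb⟩ := exists_adj_not_btw h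
  exact compSet_congr hb ▸ compSet_mem_clus hadj

lemma compSet_nonempty {v u : T.V} (h : T.tree.Adj v u) : (T.compSet v u).Nonempty := by
  have := T.fintypeV
  obtain ⟨w, hw, hmax⟩ := Set.exists_max_image {w | ¬ T.Btw w v u}
    (fun w => (T.treePath v w).length) (Set.toFinite _)
    ⟨u, fun hb => h.ne (btw_self_iff.1 hb)⟩
  have hwv : w ≠ v := fun hwv => hw (hwv ▸ btw_left)
  suffices hleaf : w ∈ T.ι '' X by
    obtain ⟨x, hx, rfl⟩ := hleaf
    exact ⟨x, mem_compSet_iff.2 ⟨hx, hw⟩⟩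
  by_contra hint
  obtain ⟨n₁, hn₁, hbn₁⟩ := exists_adj_btw hwv
  obtain ⟨n, hn, hnn₁⟩ := exists_adj_ne hint hn₁
  have hvwn : T.Btw v w n := btw_of_adj_of_not_btw hn.symm fun hb => by
    rcases (btw_adj_iff hn).1 (hbn₁.btw_of_adj hn₁ hb.symm hn.ne') with h' | h'
    exacts [hn₁.ne h'.symm, hnn₁ h'.symm]
  have hnv : ¬ T.Btw n v w := fun hb => by
    rcases (btw_adj_iff hn.symm).1 hb with rfl | rfl
    exacts [hn.ne (btw_self_iff.1 hvwn), hwv rfl]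
  have hlen := congrArg Walk.length hvwn.treePath_eq_append
  rw [Walk.length_append, treePath_of_adj hn, Walk.length_cons, Walk.length_nil] at hlen
  have := hmax n (not_btw_trans hnv hw)
  omega

lemma compSet_ssubset_compSet {u z₀ z₁ : T.V} (hadj : T.tree.Adj z₀ z₁) (h : T.Btw u z₀ z₁)
    (hu : u ≠ z₀) : T.compSet z₀ u ⊂ T.compSet z₁ u := by
  obtain ⟨w, hw, huw⟩ := exists_adj_not_btw hu
  obtain ⟨y, hy, hyw, hyz₁⟩ := exists_adj_ne_ne hw hadj fun e => huw (e ▸ h)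
  obtain ⟨x, hx⟩ := compSet_nonempty hy
  have hz₁ : T.compSet z₁ z₀ = T.compSet z₁ u :=
    compSet_congr fun hb => hadj.ne (hb.eq_of_btw h.symm)
  refine (Set.ssubset_iff_of_subset (compSet_subset_compSet h)).2 ⟨x, ?_, fun hx' => ?_⟩
  · exact hz₁ ▸ compSet_subset_compSet_of_adj hadj (btw_of_adj_of_adj hy hadj hyz₁) hx
  · rw [compSet_congr huw] at hx'
    exact (btw_of_adj_of_adj hw hy hyw.symm).disjoint_compSet.ne_of_mem hx' hx rfl

lemma mk_mem_cords_iff {x y : α} : s(x, y) ∈ cords X ↔ x ≠ y ∧ x ∈ X ∧ y ∈ X := by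
  simp [cords, Sym2.mk_isDiag_iff]

lemma cords_finite (hX : X.Finite) : (cords X).Finite :=
  hX.toFinset.sym2.finite_toSet.subset fun _ hc =>
    Finset.mem_coe.2 (Finset.mem_sym2_iff.2 fun _ ha => hX.mem_toFinset.2 (hc.2 _ ha))

section Transversal

variable {f : Set α → α}

lemma apply_compSet_eq_of_neighborSet_eq (hf : ∀ A ∈ clus T, f A ∈ A) {a : α} (ha : a ∈ X)
    {v : T.V} (hv : T.tree.neighborSet (T.ι a) = {v}) : f (T.compSet v (T.ι a)) = a := by
  have hadj : T.tree.Adj v (T.ι a) := by rw [adj_comm, ← mem_neighborSet, hv]; rfl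
  simpa [compSet_eq_singleton ha hv] using hf _ (compSet_mem_clus hadj)

lemma mk_mem_tripletCoverOf {a b : α} (ha : a ∈ X) (hb : b ∈ X) {v : T.V}
    (hv : T.IsInterior v) (h : T.Btw (T.ι a) v (T.ι b)) (hfa : f (T.compSet v (T.ι a)) = a)
    (hfb : f (T.compSet v (T.ι b)) = b) : s(a, b) ∈ tripletCoverOf T f := by
  obtain ⟨u₁, h₁, hb₁⟩ := exists_adj_not_btw fun e => hv ⟨a, ha, e⟩
  obtain ⟨u₂, h₂, hb₂⟩ := exists_adj_not_btw fun e => hv ⟨b, hb, e⟩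
  refine ⟨v, u₁, u₂, hv, h₁, h₂, fun e => not_btw_trans hb₁ (fun h' => hb₂ (e ▸ h'.symm)) h, ?_⟩
  rw [← compSet_congr hb₁, ← compSet_congr hb₂, hfa, hfb]

lemma tripletCoverOf_subset_cords (hf : ∀ A ∈ clus T, f A ∈ A) :
    tripletCoverOf T f ⊆ cords X := by
  rintro _ ⟨v, u₁, u₂, -, h₁, h₂, hne, rfl⟩
  have hm₁ := hf _ (compSet_mem_clus h₁)
  have hm₂ := hf _ (compSet_mem_clus h₂)
  exact mk_mem_cords_iff.2 ⟨fun e => (btw_of_adj_of_adj h₁ h₂ hne).disjoint_compSet.ne_of_mem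
    hm₁ hm₂ e, hm₁.1, hm₂.1⟩

lemma exists_mem_tripletCoverOf (hcard : 3 ≤ X.ncard) (hf : ∀ A ∈ clus T, f A ∈ A) {a : α}
    (ha : a ∈ X) : ∃ c ∈ tripletCoverOf T f, a ∈ c := by
  obtain ⟨v, hv⟩ := exists_neighborSet_eq (T := T) ha
  have hadj : T.tree.Adj v (T.ι a) := by rw [adj_comm, ← mem_neighborSet, hv]; rfl
  have hint := isInterior_of_neighborSet_eq hcard ha hv
  obtain ⟨u, hu, hua⟩ := exists_adj_ne hint hadj
  refine ⟨_, ⟨v, T.ι a, u, hint, hadj, hu, hua.symm, rfl⟩, ?_⟩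
  rw [apply_compSet_eq_of_neighborSet_eq hf ha hv]
  exact Sym2.mem_mk_left _ _

end Transversal

section Anchor

variable {f : Set α → α}

def IsAnchor (T : XTree α X) (f : Set α → α) (a : α) (v : T.V) : Prop :=
  T.IsInterior v ∧ f (T.compSet v (T.ι a)) = a

def anchorSizes (T : XTree α X) (f : Set α → α) (a b : α) : Set ℕ :=
  {n | ∃ v, IsAnchor T f a v ∧ T.Btw (T.ι a) v (T.ι b) ∧ (T.compSet v (T.ι a)).ncard = n}

noncomputable def anchorDepth (T : XTree α X) (f : Set α → α) (a b : α) : ℕ :=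
  sSup (anchorSizes T f a b)

noncomputable def cordDepth (T : XTree α X) (f : Set α → α) : Sym2 α → ℕ :=
  Sym2.lift ⟨fun a b => anchorDepth T f a b + anchorDepth T f b a, fun _ _ => add_comm _ _⟩

lemma cordDepth_mk (a b : α) : cordDepth T f s(a, b) = anchorDepth T f a b + anchorDepth T f b a :=
  Sym2.lift_mk _ _ _

lemma bddAbove_anchorSizes (a b : α) : BddAbove (anchorSizes T f a b) :=
  ⟨X.ncard, fun _ ⟨_, _, _, hn⟩ => hn ▸ Set.ncard_le_ncard compSet_subset_X T.finite⟩

lemma ncard_le_anchorDepth {a b : α} {v : T.V} (hv : IsAnchor T f a v)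
    (h : T.Btw (T.ι a) v (T.ι b)) : (T.compSet v (T.ι a)).ncard ≤ anchorDepth T f a b :=
  le_csSup (bddAbove_anchorSizes a b) ⟨v, hv, h, rfl⟩

lemma exists_ncard_eq_anchorDepth (hcard : 3 ≤ X.ncard) (hf : ∀ A ∈ clus T, f A ∈ A)
    {a b : α} (ha : a ∈ X) (hb : b ∈ X) (hab : a ≠ b) :
    ∃ v, IsAnchor T f a v ∧ T.Btw (T.ι a) v (T.ι b) ∧
      (T.compSet v (T.ι a)).ncard = anchorDepth T f a b := by
  obtain ⟨v, hv⟩ := exists_neighborSet_eq (T := T) ha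
  have hva : IsAnchor T f a v :=
    ⟨isInterior_of_neighborSet_eq hcard ha hv, apply_compSet_eq_of_neighborSet_eq hf ha hv⟩
  have hbv : T.Btw (T.ι a) v (T.ι b) :=
    (btw_of_neighborSet_eq hv fun e => hab (T.ι_injOn ha hb e.symm)).symm
  exact Nat.sSup_mem (s := anchorSizes T f a b) ⟨_, v, hva, hbv, rfl⟩ (bddAbove_anchorSizes a b)

lemma mk_mem_tripletCoverOf_of_adj (hf : ∀ A ∈ clus T, f A ∈ A) {a b : α} (ha : a ∈ X)
    (hb : b ∈ X) {v : T.V} (hv : IsAnchor T f a v) (h : T.Btw (T.ι a) v (T.ι b))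
    (hadj : T.tree.Adj v (T.ι b)) : s(a, b) ∈ tripletCoverOf T f := by
  obtain ⟨w, hw⟩ := exists_neighborSet_eq (T := T) hb
  have hvw : v ∈ T.tree.neighborSet (T.ι b) := hadj.symm
  rw [hw, Set.mem_singleton_iff] at hvw
  subst hvw
  exact mk_mem_tripletCoverOf ha hb hv.1 h hv.2 (apply_compSet_eq_of_neighborSet_eq hf hb hw)

end Anchor

section Pivot

variable {f : Set α → α}

structure PivotSide (T : XTree α X) (f : Set α → α) (a b p : α) (z₀ z₁ : T.V) : Prop where
  isAnchor₀ : IsAnchor T f a z₀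
  btw₀ : T.Btw (T.ι a) z₀ (T.ι b)
  ncard_eq : (T.compSet z₀ (T.ι a)).ncard = anchorDepth T f a b
  adj : T.tree.Adj z₀ z₁
  btw₁ : T.Btw z₀ z₁ (T.ι b)
  isAnchor₁ : IsAnchor T f p z₁
  lt_ncard : anchorDepth T f a b < (T.compSet z₁ (T.ι p)).ncard
  mem : p ∈ X
  btw_to_left : T.Btw (T.ι p) z₀ (T.ι a)
  btw_to_right : T.Btw (T.ι p) z₀ (T.ι b)
  not_btw : ¬ T.Btw (T.ι p) z₁ (T.ι a)
  mem_tripletCoverOf : s(a, p) ∈ tripletCoverOf T f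

theorem exists_pivotSide (hcard : 3 ≤ X.ncard) (hf : IsStableTransversal (clus T) f)
    {a b : α} (ha : a ∈ X) (hb : b ∈ X) (hab : a ≠ b) (hL : s(a, b) ∉ tripletCoverOf T f) :
    ∃ p z₀ z₁, PivotSide T f a b p z₀ z₁ := by
  obtain ⟨z₀, hz₀, hbtw₀, hncard⟩ := exists_ncard_eq_anchorDepth hcard hf.1 ha hb hab
  have haz₀ : T.ι a ≠ z₀ := fun e => hz₀.1 ⟨a, ha, e⟩
  obtain ⟨z₁, hadj, hbtw₁⟩ := exists_adj_btw fun e => hz₀.1 ⟨b, hb, e.symm⟩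
  have hz₀z₁ : T.Btw (T.ι a) z₀ z₁ := hbtw₀.shift_right hbtw₁
  have hz₁z₀ : ¬ T.Btw (T.ι a) z₁ z₀ := fun h => hadj.ne (hz₀z₁.eq_of_btw' h)
  have haz₁ : T.ι a ≠ z₁ := fun e => hz₁z₀ (e ▸ btw_left)
  have hz₁ : T.IsInterior z₁ := isInterior_of_btw (hbtw₀.trans_right hbtw₁) haz₁.symm
    fun e => hL (mk_mem_tripletCoverOf_of_adj hf.1 ha hb hz₀ hbtw₀ (e ▸ hadj))
  have hlt := Set.ncard_lt_ncard (compSet_ssubset_compSet hadj hz₀z₁ haz₀)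
    (T.finite.subset compSet_subset_X)
  set p := f (T.compSet z₁ (T.ι a)) with hp
  have hpC : p ∈ T.compSet z₁ (T.ι a) := hf.1 _ (compSet_mem_clus_of_ne haz₁)
  obtain ⟨hpX, hnp⟩ := mem_compSet_iff.1 hpC
  -- maximality of `z₀`: otherwise `z₁` would be a deeper anchor of `a`
  have hpa : p ≠ a := fun e =>
    (ncard_le_anchorDepth ⟨hz₁, e ▸ hp.symm⟩ (hbtw₀.trans_right hbtw₁)).not_gt (hncard ▸ hlt)
  have hpz₀ : T.Btw (T.ι p) z₀ (T.ι a) := not_not.1 fun h => hpa <|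
    (hf.2 _ (compSet_mem_clus_of_ne haz₁) _ (compSet_mem_clus_of_ne haz₀)
      (mem_compSet_iff.2 ⟨hpX, h⟩) (compSet_subset_compSet hz₀z₁)).trans hz₀.2
  have hpz₀z₁ : T.Btw (T.ι p) z₀ z₁ := btw_of_adj_of_not_btw hadj.symm (not_btw_trans hnp hz₁z₀)
  have hfp : f (T.compSet z₀ (T.ι p)) = p :=
    (hf.2 _ (compSet_mem_clus_of_ne haz₁) _ (compSet_mem_clus_of_ne fun e => hz₀.1 ⟨p, hpX, e⟩)
      (self_mem_compSet hpX fun e => hz₀.1 ⟨p, hpX, e⟩)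
      (compSet_congr hz₁z₀ ▸ compSet_subset_compSet_of_adj hadj hpz₀z₁)).symm
  refine ⟨p, z₀, z₁, hz₀, hbtw₀, hncard, hadj, hbtw₁, ⟨hz₁, by rw [compSet_congr hnp]⟩,
    by rwa [compSet_congr hnp, ← hncard], hpX, hpz₀, ?_, hnp,
    mk_mem_tripletCoverOf ha hpX hz₀.1 hpz₀.symm hz₀.2 hfp⟩
  exact (hpz₀z₁.extend hbtw₁ hadj.ne).trans_left hpz₀z₁

namespace PivotSide

variable {a b p : α} {z₀ z₁ : T.V}

lemma ne_left (h : PivotSide T f a b p z₀ z₁) : p ≠ a := by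
  rintro rfl
  exact h.isAnchor₀.1 ⟨p, h.mem, (btw_self_iff.1 h.btw_to_left).symm⟩

lemma ne_right (hb : b ∈ X) (h : PivotSide T f a b p z₀ z₁) : p ≠ b := by
  rintro rfl
  exact h.isAnchor₀.1 ⟨p, hb, (btw_self_iff.1 h.btw_to_right).symm⟩

lemma btw_next (h : PivotSide T f a b p z₀ z₁) : T.Btw (T.ι p) z₁ (T.ι b) :=
  h.btw_to_right.trans_right h.btw₁

lemma anchorDepth_le (h : PivotSide T f a b p z₀ z₁) {y : α} (hy : T.Btw (T.ι a) z₀ (T.ι y)) :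
    anchorDepth T f a b ≤ anchorDepth T f a y :=
  h.ncard_eq ▸ ncard_le_anchorDepth h.isAnchor₀ hy

lemma anchorDepth_lt (h : PivotSide T f a b p z₀ z₁) {y : α} (hy : T.Btw (T.ι p) z₁ (T.ι y)) :
    anchorDepth T f a b < anchorDepth T f p y :=
  h.lt_ncard.trans_le (ncard_le_anchorDepth h.isAnchor₁ hy)

variable {q : α} {w₀ w₁ : T.V}

lemma btw_anchors (hf : IsStableTransversal (clus T) f) (ha : a ∈ X) (hb : b ∈ X)
    (hA : PivotSide T f a b p z₀ z₁) (hB : PivotSide T f b a q w₀ w₁)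
    (hL : s(a, b) ∉ tripletCoverOf T f) : T.Btw (T.ι a) z₀ w₀ ∧ z₀ ≠ w₀ := by
  have h : ¬ T.Btw (T.ι a) w₀ z₀ := fun h => hL <| by
    refine mk_mem_tripletCoverOf ha hb hB.isAnchor₀.1 hB.btw₀.symm ?_ hB.isAnchor₀.2
    have haz₀ : T.ι a ≠ z₀ := fun e => hA.isAnchor₀.1 ⟨a, ha, e⟩
    have haw₀ : T.ι a ≠ w₀ := fun e => hB.isAnchor₀.1 ⟨a, ha, e⟩
    have hmem : f (T.compSet z₀ (T.ι a)) ∈ T.compSet w₀ (T.ι a) := by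
      rw [hA.isAnchor₀.2]
      exact self_mem_compSet ha haw₀
    rw [← hf.2 _ (compSet_mem_clus_of_ne haz₀) _ (compSet_mem_clus_of_ne haw₀) hmem
      (compSet_subset_compSet h), hA.isAnchor₀.2]
  exact ⟨(hA.btw₀.total hB.btw₀.symm).resolve_right h, fun e => h (e ▸ btw_right)⟩

lemma btw_of_btw_anchors (hA : PivotSide T f a b p z₀ z₁) (hB : PivotSide T f b a q w₀ w₁)
    (h : T.Btw (T.ι a) z₀ w₀) (hne : z₀ ≠ w₀) :
    T.Btw (T.ι a) z₀ (T.ι q) ∧ T.Btw (T.ι p) z₁ (T.ι q) ∧ ¬ T.Btw (T.ι p) w₀ (T.ι a) := by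
  have hz₁w₀ : T.Btw z₀ z₁ w₀ := hA.btw₁.btw_of_adj hA.adj (hB.btw₀.symm.shift_left h) hne.symm
  have hw₀q : T.Btw z₀ w₀ (T.ι q) := (hB.btw_to_right.shift_right h.symm).symm
  refine ⟨(hB.btw_to_right.trans_right h.symm).symm, ?_, fun hb => hA.not_btw ?_⟩
  · exact (hA.btw_to_right.shift_right hA.btw₁).extend (hw₀q.trans_left hz₁w₀) hA.adj.ne
  · exact (hb.symm.trans_left (h.trans_right hz₁w₀)).symm

end PivotSide

lemma quartet_of_btw {a p q b : α} (ha : a ∈ X) (hp : p ∈ X) (hq : q ∈ X) (hb : b ∈ X)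
    (hd : [a, p, q, b].Pairwise (· ≠ ·))
    (h : ∀ v, T.Btw (T.ι a) v (T.ι p) → ¬ T.Btw (T.ι q) v (T.ι b)) : Quartet T a p q b :=
  ⟨ha, hp, hq, hb, hd, fun P Q hP hQ v hvP hvQ => by
    rw [treePath_eq_of_isPath P hP] at hvP
    rw [treePath_eq_of_isPath Q hQ] at hvQ
    exact h v hvP hvQ⟩

theorem exists_pivots (hcard : 3 ≤ X.ncard) (hf : IsStableTransversal (clus T) f)
    {a b : α} (ha : a ∈ X) (hb : b ∈ X) (hab : a ≠ b) (hL : s(a, b) ∉ tripletCoverOf T f) :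
    ∃ p q, Quartet T a p q b ∧ s(a, p) ∈ tripletCoverOf T f ∧ s(b, q) ∈ tripletCoverOf T f ∧
      cordDepth T f s(a, b) < cordDepth T f s(a, q) ∧
      cordDepth T f s(a, b) < cordDepth T f s(b, p) ∧
      cordDepth T f s(a, b) < cordDepth T f s(p, q) := by
  obtain ⟨p, z₀, z₁, hA⟩ := exists_pivotSide hcard hf ha hb hab hL
  obtain ⟨q, w₀, w₁, hB⟩ := exists_pivotSide hcard hf hb ha hab.symm (Sym2.eq_swap ▸ hL)
  obtain ⟨h, hne⟩ := hA.btw_anchors hf ha hb hB hL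
  have h' : T.Btw (T.ι b) w₀ z₀ := (hB.btw₀.symm.shift_left h).symm
  obtain ⟨haq, hpq, hpw₀⟩ := hA.btw_of_btw_anchors hB h hne
  obtain ⟨hbp, hqp, -⟩ := hB.btw_of_btw_anchors hA h' hne.symm
  have hd : [a, p, q, b].Pairwise (· ≠ ·) := by
    have := hA.ne_left; have := hA.ne_right hb; have := hB.ne_left; have := hB.ne_right ha
    have : p ≠ q := fun e => hpw₀ (e ▸ hB.btw_to_right)
    simp only [List.pairwise_cons, List.mem_cons, List.not_mem_nil, List.Pairwise.nil]
    grind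
  have hw₀a : T.ι a ≠ w₀ := fun e => hB.isAnchor₀.1 ⟨a, ha, e⟩
  refine ⟨p, q, quartet_of_btw ha hA.mem hB.mem hb hd fun v hv hv' =>
      hv.not_btw_of_not_btw (fun e => hw₀a (btw_self_iff.1 e).symm) hpw₀
        (hv'.btw_of_btw_of_btw hB.btw_to_right hB.btw₀), hA.mem_tripletCoverOf,
      hB.mem_tripletCoverOf, ?_⟩
  have := hA.anchorDepth_le haq; have := hB.anchorDepth_lt hB.btw_next
  have := hB.anchorDepth_le hbp; have := hA.anchorDepth_lt hA.btw_next
  have := hA.anchorDepth_lt hpq; have := hB.anchorDepth_lt hqp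
  simp only [cordDepth_mk]
  omega

end Pivot

lemma Quartet.mem_cords {a p q b : α} (h : Quartet T a p q b) :
    ∀ c ∈ [s(a, p), s(a, q), s(b, p), s(b, q), s(p, q)], c ∈ cords X := by
  obtain ⟨ha, hp, hq, hb, hd, -⟩ := h
  simp only [List.pairwise_cons, List.mem_cons, List.not_mem_nil, List.Pairwise.nil] at hd
  simp only [List.mem_cons, List.not_mem_nil, or_false, forall_eq_or_imp, forall_eq,
    mk_mem_cords_iff]
  grind

theorem exists_isShellableOrdering {L : Set (Sym2 α)} (μ : Sym2 α → ℕ)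
    (h : ∀ a b, s(a, b) ∈ cords X \ L → ∃ p q, Quartet T a p q b ∧
      ∀ c ∈ [s(a, p), s(a, q), s(b, p), s(b, q), s(p, q)], c ∈ L ∨ μ s(a, b) < μ c) :
    ∃ ord, IsShellableOrdering T L ord := by
  obtain ⟨l, hnd, hmem, hearlier⟩ :=
    ((cords_finite T.finite).sdiff (t := L)).exists_list_mem_take_of_lt μ
  refine ⟨l, hnd, hmem, fun i hi => ?_⟩
  obtain ⟨⟨a, b⟩, hab : s(a, b) = l.get ⟨i, hi⟩⟩ := Sym2.mk_surjective (l.get ⟨i, hi⟩)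
  obtain ⟨p, q, hq, hc⟩ := h a b (hab ▸ (hmem _).1 (List.get_mem _ _))
  refine ⟨a, b, p, q, hab.symm, hq, fun c hc' => or_iff_not_imp_left.2 fun hcL => ?_⟩
  exact hearlier i hi c ⟨hq.mem_cords c hc', hcL⟩ (hab ▸ (hc c hc').resolve_left hcL)

end XTree

open XTree in
theorem stableTripletCover_isShellableLasso_general {α : Type} (X : Set α)
    (hcard : 3 ≤ X.ncard) (T : XTree α X)
    (L : Set (Sym2 α)) (hL : IsStableTripletCover T L) :
    IsShellableLasso T L := by
  obtain ⟨f, hf, rfl⟩ := hL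
  refine ⟨tripletCoverOf_subset_cords hf.1, fun a ha => exists_mem_tripletCoverOf hcard hf.1 ha,
    exists_isShellableOrdering (cordDepth T f) fun a b ⟨hab, hL⟩ => ?_⟩
  obtain ⟨hne, ha, hb⟩ := mk_mem_cords_iff.1 hab
  obtain ⟨p, q, hq, hap, hbq, haq, hbp, hpq⟩ := exists_pivots hcard hf ha hb hne hL
  refine ⟨p, q, hq, ?_⟩
  simp only [List.mem_cons, List.not_mem_nil, or_false]
  rintro c (rfl | rfl | rfl | rfl | rfl)
  exacts [Or.inl hap, Or.inr haq, Or.inr hbp, Or.inl hbq, Or.inr hpq]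

open XTree in
/-- If `L` is a stable triplet cover of a fully-resolved `X`-tree `T`
with `n := |X| ≥ 3`, then `L` is a shellable lasso for `T`, i.e. `cords X - L`
is `T`-shellable. -/
theorem stableTripletCover_isShellableLasso {α : Type} (X : Set α) (hfin : X.Finite)
    (hcard : 3 ≤ X.ncard) (T : XTree α X) (hT : T.IsFullyResolved)
    (L : Set (Sym2 α)) (hL : IsStableTripletCover T L) :
    IsShellableLasso T L :=
  stableTripletCover_isShellableLasso_general X hcard T L hL
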